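/- arXiv:2603.23641 — 2 statements merged into one kernel-verified Lean document; each statement's English description precedes it below -/
import Mathlib

section
/- The Weyl operators are trace-orthogonal: for all a, b, a', b' : Fin d, the trace of (X^(a:ℕ) * Z^(b:ℕ))ᴴ * (X^(a':ℕ) * Z^(b':ℕ)) equals d if a = a' and b = b', and equals 0 otherwise. -/
/-!
`X^a Z^b` is a weighted shift: its `(i, k)` entry is `ω^(k b)` if `i = k + a` and `0` otherwise.
For weighted shifts `A`, `B` with shifts `a`, `a'`, the trace of `Aᴴ B` vanishes unless `a = a'`,
and is then `∑ k, conj (ω^(k b)) ω^(k b') = ∑ k, ζ^k` with `ζ = ω^(b' - b)`. Since `|ω| = 1`,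
`ζ` is a `d`-th root of unity, and it equals `1` exactly when `b = b'` because `ω` is primitive;
so the geometric sum is `d` or `0`.
-/

open Matrix Complex

/-- The primitive `d`-th root of unity `ω = exp(2πi/d)`. -/
noncomputable def omega (d : ℕ) : ℂ := Complex.exp (2 * Real.pi * Complex.I / d)

/-- The generalized Pauli shift matrix `X` on a `d`-dimensional qudit:
`X i j = 1` iff `i = j + 1 (mod d)`. -/
def PauliX (d : ℕ) [NeZero d] : Matrix (Fin d) (Fin d) ℂ :=
  Matrix.of fun i j => if i = j + 1 then 1 else 0

/-- The generalized Pauli phase matrix `Z = diag(1, ω, ω², …)`. -/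
noncomputable def PauliZ (d : ℕ) [NeZero d] : Matrix (Fin d) (Fin d) ℂ :=
  Matrix.diagonal fun j => omega d ^ (j : ℕ)

open Finset

lemma isPrimitiveRoot_omega (d : ℕ) [NeZero d] : IsPrimitiveRoot (omega d) d := by
  simpa [omega, mul_comm, mul_assoc, div_eq_mul_inv] using
    Complex.isPrimitiveRoot_exp d (NeZero.ne d)

lemma geom_sum_eq_ite_of_pow_eq_one {K : Type*} [DivisionRing K] [DecidableEq K]
    {ζ : K} {n : ℕ} (h : ζ ^ n = 1) :
    ∑ i ∈ range n, ζ ^ i = if ζ = 1 then (n : K) else 0 := by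
  split_ifs with hζ
  · simp [hζ]
  · rw [geom_sum_eq hζ, h, sub_self, zero_div]

lemma IsPrimitiveRoot.sum_star_pow_mul_pow {ω : ℂ} {d : ℕ} [NeZero d]
    (hω : IsPrimitiveRoot ω d) (b b' : Fin d) :
    ∑ k : Fin d, star (ω ^ ((k : ℕ) * b)) * ω ^ ((k : ℕ) * b') =
      if b = b' then (d : ℂ) else 0 := by
  have hstar (n : ℕ) : star (ω ^ n) = (ω ^ n)⁻¹ :=
    (Complex.inv_eq_conj (by rw [norm_pow, hω.norm'_eq_one (NeZero.ne d), one_pow])).symm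
  set ζ := (ω ^ (b : ℕ))⁻¹ * ω ^ (b' : ℕ)
  have hterm (k : Fin d) : star (ω ^ ((k : ℕ) * b)) * ω ^ ((k : ℕ) * b') = ζ ^ (k : ℕ) := by
    rw [hstar, mul_pow, inv_pow, ← pow_mul, ← pow_mul, mul_comm (b : ℕ), mul_comm (b' : ℕ)]
  have hζd : ζ ^ d = 1 := by
    rw [mul_pow, inv_pow, ← pow_mul, ← pow_mul, pow_mul', pow_mul' ω, hω.pow_eq_one, one_pow,
      one_pow, inv_one, one_mul]
  have hζ : ζ = 1 ↔ b = b' := by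
    rw [inv_mul_eq_one₀ (pow_ne_zero _ (hω.ne_zero (NeZero.ne d))), Fin.ext_iff]
    exact ⟨fun h => hω.pow_inj b.isLt b'.isLt h, fun h => by rw [h]⟩
  simp_rw [hterm, Fin.sum_univ_eq_sum_range (fun k => ζ ^ k), geom_sum_eq_ite_of_pow_eq_one hζd,
    hζ]

lemma Matrix.trace_conjTranspose_mul_of_shift {G R : Type*} [AddGroup G] [Fintype G]
    [DecidableEq G] [NonUnitalNonAssocSemiring R] [StarAddMonoid R] (p q : G) (f g : G → R) :
    trace ((of fun i k => if i = k + p then f k else 0)ᴴ *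
        of fun i k => if i = k + q then g k else 0) =
      if p = q then ∑ k, star (f k) * g k else 0 := by
  simp only [trace, diag_apply, mul_apply, conjTranspose_apply, of_apply, apply_ite star, star_zero,
    ite_mul, zero_mul, mul_ite, mul_zero, sum_ite_eq', mem_univ, if_true,
    add_right_inj, eq_comm (a := q), sum_ite_irrel, sum_const_zero]

open Fin.NatCast in
lemma pauliX_pow_apply (d : ℕ) [NeZero d] (n : ℕ) (i j : Fin d) :
    (PauliX d ^ n) i j = if i = j + n then 1 else 0 := by
  induction n generalizing i j with
  | zero => simp [one_apply]
  | succ n ih =>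
    rw [pow_succ', mul_apply, sum_eq_single (j + n)]
    · rw [ih]
      simp [PauliX, add_assoc, add_comm (n : Fin d) 1]
    · intro k _ hk
      rw [ih, if_neg hk, mul_zero]
    · simp

open Fin.NatCast in
lemma pauliX_pow_mul_pauliZ_pow (d : ℕ) [NeZero d] (p q : ℕ) :
    PauliX d ^ p * PauliZ d ^ q =
      of fun i k : Fin d => if i = k + p then omega d ^ ((k : ℕ) * q) else 0 := by
  ext i k
  simp [PauliZ, diagonal_pow, mul_diagonal, pauliX_pow_apply, pow_mul]

theorem weyl_trace_orthogonal (d : ℕ) [NeZero d] (a b a' b' : Fin d) :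
    Matrix.trace ((PauliX d ^ (a : ℕ) * PauliZ d ^ (b : ℕ))ᴴ *
        (PauliX d ^ (a' : ℕ) * PauliZ d ^ (b' : ℕ))) =
      if a = a' ∧ b = b' then (d : ℂ) else 0 := by
  rw [pauliX_pow_mul_pauliZ_pow, pauliX_pow_mul_pauliZ_pow, trace_conjTranspose_mul_of_shift]
  simp only [Fin.cast_val_eq_self, (isPrimitiveRoot_omega d).sum_star_pow_mul_pow, ← ite_and]
end

section
/- The uniform Weyl twirl is completely depolarizing: for every matrix A : Matrix (Fin d) (Fin d) ℂ, (1/d²) • ∑_{(a,b) ∈ Fin d × Fin d} (X^(a:ℕ) * Z^(b:ℕ)) * A * (X^(a:ℕ) * Z^(b:ℕ))ᴴ = ((trace A)/d) • 1. -/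
open Matrix Complex

/-!
Conjugation by `Z ^ b` multiplies the `(i, j)` entry of `A` by `(ω ^ i * ω⁻ʲ) ^ b`, so summing
over `b` kills the off-diagonal entries (orthogonality of the `d`-th roots of unity) and leaves
`d • diagonal (diag A)`. `X ^ a` is the permutation matrix of the cyclic shift by `a`, so
conjugating a diagonal matrix by it shifts the diagonal, and summing over `a` puts `trace A` in
every diagonal slot. Conjugation by `X ^ a * Z ^ b` is the composite of the two, so the Weyl
twirl is `d • trace A • 1`.
-/

def twirl {ι n R : Type*} [Fintype ι] [Fintype n] [Semiring R] [StarRing R]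
    (U : ι → Matrix n n R) (A : Matrix n n R) : Matrix n n R :=
  ∑ i, U i * A * (U i)ᴴ

section Twirl

variable {ι κ n R : Type*} [Fintype ι] [Fintype κ] [Fintype n]

theorem twirl_prod [Semiring R] [StarRing R] (U : ι → Matrix n n R) (V : κ → Matrix n n R)
    (A : Matrix n n R) :
    twirl (fun p : ι × κ => U p.1 * V p.2) A = twirl U (twirl V A) := by
  simp only [twirl, Fintype.sum_prod_type, Matrix.mul_sum, Matrix.sum_mul, conjTranspose_mul,
    Matrix.mul_assoc]

theorem twirl_smul [CommSemiring R] [StarRing R] (U : ι → Matrix n n R) (c : R)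
    (A : Matrix n n R) : twirl U (c • A) = c • twirl U A := by
  simp only [twirl, Matrix.mul_smul, Matrix.smul_mul, Finset.smul_sum]

theorem Matrix.permMatrix_mul_diagonal_mul_conjTranspose [DecidableEq n] [Semiring R]
    [StarRing R] (σ : Equiv.Perm n) (v : n → R) :
    σ.permMatrix R * diagonal v * (σ.permMatrix R)ᴴ = diagonal (v ∘ σ) := by
  rw [conjTranspose_permMatrix, PEquiv.toMatrix_toPEquiv_mul, PEquiv.mul_toMatrix_toPEquiv,
    submatrix_submatrix]
  exact submatrix_diagonal_equiv v σ

end Twirl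

theorem IsPrimitiveRoot.sum_pow_mul_inv_pow {K : Type*} [Field K] {ζ : K} {n : ℕ}
    (hζ : IsPrimitiveRoot ζ n) (i j : Fin n) :
    ∑ b : Fin n, (ζ ^ (i : ℕ) * (ζ ^ (j : ℕ))⁻¹) ^ (b : ℕ) = if i = j then (n : K) else 0 := by
  have hζ₀ : ζ ≠ 0 := hζ.ne_zero (Fin.pos i).ne'
  split_ifs with hij
  · simp [hij, hζ₀]
  · set μ := ζ ^ (i : ℕ) * (ζ ^ (j : ℕ))⁻¹
    have hμn : μ ^ n = 1 := by
      rw [mul_pow, inv_pow, ← pow_mul, ← pow_mul, pow_mul', pow_mul' ζ (j : ℕ), hζ.pow_eq_one,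
        one_pow, one_pow, inv_one, mul_one]
    have hμ : μ ≠ 1 := fun h =>
      hij (Fin.ext (hζ.pow_inj i.isLt j.isLt ((mul_inv_eq_one₀ (pow_ne_zero _ hζ₀)).mp h)))
    rw [Fin.sum_univ_eq_sum_range (fun b => μ ^ b), geom_sum_eq hμ, hμn, sub_self, zero_div]

section Pauli

variable (d : ℕ) [NeZero d]

theorem omega_isPrimitiveRoot : IsPrimitiveRoot (omega d) d :=
  Complex.isPrimitiveRoot_exp d (NeZero.ne d)

theorem star_omega : star (omega d) = (omega d)⁻¹ :=
  (RCLike.inv_eq_conj ((omega_isPrimitiveRoot d).norm'_eq_one (NeZero.ne d))).symm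

-- `permMatrixHom σ = σ⁻¹.permMatrix` is a monoid hom, unlike `permMatrix`, so `map_pow` applies.
theorem pauliX_eq_permMatrixHom :
    PauliX d = Matrix.permMatrixHom (Equiv.addRight (1 : Fin d)) := by
  ext i j
  simp [PauliX, PEquiv.toMatrix_apply, eq_add_neg_iff_add_eq, eq_comm]

open scoped Fin.NatCast in
theorem pauliX_pow (a : Fin d) :
    PauliX d ^ (a : ℕ) = (Equiv.addRight (-a)).permMatrix ℂ := by
  rw [pauliX_eq_permMatrixHom, ← map_pow, Equiv.nsmul_addRight, permMatrixHom_apply,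
    Equiv.neg_addRight]
  simp

theorem pauliZ_pow (n : ℕ) :
    PauliZ d ^ n = diagonal fun k : Fin d => (omega d ^ (k : ℕ)) ^ n := by
  rw [PauliZ, diagonal_pow]
  rfl

theorem twirl_pauliX_pow_diagonal (v : Fin d → ℂ) :
    twirl (fun a : Fin d => PauliX d ^ (a : ℕ)) (diagonal v) = (∑ k, v k) • 1 := by
  simp only [twirl, pauliX_pow, permMatrix_mul_diagonal_mul_conjTranspose]
  ext i j
  by_cases hij : i = j
  · subst hij
    simpa [Matrix.sum_apply, sub_eq_add_neg] using Equiv.sum_comp (Equiv.subLeft i) v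
  · simp [Matrix.sum_apply, hij]

theorem twirl_pauliZ_pow (A : Matrix (Fin d) (Fin d) ℂ) :
    twirl (fun b : Fin d => PauliZ d ^ (b : ℕ)) A = (d : ℂ) • diagonal (diag A) := by
  ext i j
  simp only [twirl, pauliZ_pow, diagonal_conjTranspose, Matrix.sum_apply, diagonal_mul,
    mul_diagonal, Pi.star_apply, star_pow, star_omega]
  have hterm (b : Fin d) :
      (omega d ^ (i : ℕ)) ^ (b : ℕ) * A i j * ((omega d)⁻¹ ^ (j : ℕ)) ^ (b : ℕ) =
        A i j * (omega d ^ (i : ℕ) * (omega d ^ (j : ℕ))⁻¹) ^ (b : ℕ) := by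
    rw [inv_pow, mul_pow]
    ring
  rw [Finset.sum_congr rfl fun b _ => hterm b, ← Finset.mul_sum,
    (omega_isPrimitiveRoot d).sum_pow_mul_inv_pow, Matrix.smul_apply, diagonal_apply]
  split_ifs with hij
  · simp [hij, mul_comm]
  · simp

end Pauli

theorem weyl_twirl_depolarizing (d : ℕ) [NeZero d] (A : Matrix (Fin d) (Fin d) ℂ) :
    (1 / (d : ℂ) ^ 2) •
        ∑ p : Fin d × Fin d,
          (PauliX d ^ (p.1 : ℕ) * PauliZ d ^ (p.2 : ℕ)) * A *
            (PauliX d ^ (p.1 : ℕ) * PauliZ d ^ (p.2 : ℕ))ᴴ =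
      (Matrix.trace A / d) • (1 : Matrix (Fin d) (Fin d) ℂ) := by
  change (1 / (d : ℂ) ^ 2) •
      twirl (fun p : Fin d × Fin d => PauliX d ^ (p.1 : ℕ) * PauliZ d ^ (p.2 : ℕ)) A = _
  rw [twirl_prod (fun a : Fin d => PauliX d ^ (a : ℕ)) fun b : Fin d => PauliZ d ^ (b : ℕ),
    twirl_pauliZ_pow, twirl_smul, twirl_pauliX_pow_diagonal, smul_smul, smul_smul]
  have hd : (d : ℂ) ≠ 0 := NeZero.ne _
  congr 1
  rw [trace]
  field_simp
end
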